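/- (Generalized Theorem 2.) Let k ≥ 1, let a₁, …, a_k and C be nonzero integers, 0 < ε ≤ 1/(4 Σᵢ |aᵢ|), P ≥ 2k/ε², and let ρ : ℝ → ℝ be any function satisfying 0 ≤ ρ(t) ≤ 1 for all t, ρ(0) = 0, and ρ(t) = 1 whenever |t| ≥ ε. Define f_ρ : ℝ^{2k} → ℝ by f_ρ(x) = (C - Σ_{i=1}^k aᵢ xᵢ)² + P · Σ_{i=1}^k (1 - xᵢ - x_{i+k})² + Σ_{i=1}^{2k} ρ(xᵢ). Then there exists a subset S ⊆ {1, …, k} with Σ_{i∈S} aᵢ = C if and only if there exists x ∈ ℝ^{2k} with f_ρ(x) ≤ k; moreover, if no such subset exists, then f_ρ(x) ≥ k + 1/4 for all x ∈ ℝ^{2k}. -/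

import Mathlib

/-
If `S` is good, the point `(1_S, 1 - 1_S)` has no residual and no penalty, and exactly one
coordinate of each pair is nonzero, so `f_ρ = k`. Conversely, let `f_ρ(x) < k + 1/4`. Since
`P ε² ≥ 2k`, the penalty forces `|1 - xᵢ - x_{i+k}| < ε`, so at least one coordinate of each
pair has size `≥ ε`; the regularizer is then at least `k`, and below `k + 1` only if exactly one
coordinate of each pair is large. Hence the residual is `< 1/4`, and rounding each `xᵢ` to the
indicator of `|xᵢ| ≥ ε` moves `Σ aᵢ xᵢ` by at most `2ε Σ |aᵢ| ≤ 1/2`: the rounded sum is an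
integer within distance `1` of `C`.
-/

open BigOperators Finset

/-- The inclusion `{1, …, k} → {1, …, 2k}`, `i ↦ i`. -/
def lo (k : ℕ) (i : Fin k) : Fin (2 * k) :=
  ⟨i.1, by have := i.2; omega⟩

/-- The shifted inclusion `{1, …, k} → {1, …, 2k}`, `i ↦ i + k`. -/
def hi (k : ℕ) (i : Fin k) : Fin (2 * k) :=
  ⟨i.1 + k, by have := i.2; omega⟩

/-- The generalized objective of Theorem 2, with an arbitrary regularization
term `ρ`: `f_ρ(x) = (C - Σᵢ aᵢ xᵢ)² + P·Σᵢ (1 - xᵢ - x_{i+k})² + Σᵢ ρ(xᵢ)`. -/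
noncomputable def fgen (k : ℕ) (a : Fin k → ℤ) (C : ℤ) (P : ℝ) (ρ : ℝ → ℝ)
    (x : Fin (2 * k) → ℝ) : ℝ :=
  ((C : ℝ) - ∑ i : Fin k, (a i : ℝ) * x (lo k i)) ^ 2
    + P * ∑ i : Fin k, (1 - x (lo k i) - x (hi k i)) ^ 2
    + ∑ i : Fin (2 * k), ρ (x i)

lemma one_le_sum_abs_of_pos {ι : Type*} [Fintype ι] (a : ι → ℤ)
    (h : 0 < ∑ i, |(a i : ℝ)|) : 1 ≤ ∑ i, |(a i : ℝ)| := by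
  have hcast : ∑ i, |(a i : ℝ)| = ((∑ i, |a i| : ℤ) : ℝ) := by push_cast; rfl
  rw [hcast] at h ⊢
  have : (0 : ℤ) < ∑ i, |a i| := by exact_mod_cast h
  exact_mod_cast (show (1 : ℤ) ≤ ∑ i, |a i| by omega)

lemma sum_mul_eq_of_abs_sub_le {ι : Type*} [Fintype ι] (a z : ι → ℤ) (C : ℤ) (y : ι → ℝ)
    {δ : ℝ} (hz : ∀ i, |(z i : ℝ) - y i| ≤ δ) (hδ : δ * ∑ i, |(a i : ℝ)| ≤ 1 / 2)
    (hC : |(C : ℝ) - ∑ i, a i * y i| < 1 / 2) : ∑ i, a i * z i = C := by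
  have hround : |∑ i, (a i : ℝ) * z i - ∑ i, a i * y i| ≤ 1 / 2 :=
    calc |∑ i, (a i : ℝ) * z i - ∑ i, a i * y i|
        = |∑ i, (a i : ℝ) * (z i - y i)| := by simp only [mul_sub, sum_sub_distrib]
      _ ≤ ∑ i, |(a i : ℝ)| * |(z i : ℝ) - y i| := by
          simpa only [abs_mul] using abs_sum_le_sum_abs (fun i => (a i : ℝ) * (z i - y i)) univ
      _ ≤ ∑ i, |(a i : ℝ)| * δ :=
          sum_le_sum fun i _ => mul_le_mul_of_nonneg_left (hz i) (abs_nonneg _)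
      _ ≤ 1 / 2 := by rwa [← sum_mul, mul_comm]
  have hdist : |((C - ∑ i, a i * z i : ℤ) : ℝ)| < 1 := by
    push_cast
    linarith [abs_sub_le (C : ℝ) (∑ i, a i * y i) (∑ i, (a i : ℝ) * z i),
      abs_sub_comm (∑ i, (a i : ℝ) * z i) (∑ i, a i * y i)]
  have := Int.abs_lt_one_iff.mp (by exact_mod_cast hdist)
  omega

lemma sum_fin_two_mul {M : Type*} [AddCommMonoid M] (k : ℕ) (g : Fin (2 * k) → M) :
    ∑ j, g j = ∑ i : Fin k, (g (lo k i) + g (hi k i)) := by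
  rw [← (finCongr (two_mul k)).symm.sum_comp, Fin.sum_univ_add, sum_add_distrib]
  congr 1
  exact sum_congr rfl fun i _ => congrArg g (Fin.ext (by simp [hi, add_comm]))

def joinHalves {k : ℕ} (u v : Fin k → ℝ) : Fin (2 * k) → ℝ :=
  Fin.append u v ∘ finCongr (two_mul k)

@[simp]
lemma joinHalves_lo {k : ℕ} (u v : Fin k → ℝ) (i : Fin k) : joinHalves u v (lo k i) = u i :=
  Fin.append_left u v i

@[simp]
lemma joinHalves_hi {k : ℕ} (u v : Fin k → ℝ) (i : Fin k) : joinHalves u v (hi k i) = v i := by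
  convert Fin.append_right u v i using 2
  simp only [joinHalves, Function.comp_apply]
  congr 1
  exact Fin.ext (by simp [hi, add_comm])

section Pair

variable {ε t u : ℝ}

lemma le_abs_or_le_abs_of_abs_one_sub_sub_lt (hε : 3 * ε ≤ 1) (h : |1 - t - u| < ε) :
    ε ≤ |t| ∨ ε ≤ |u| := by
  by_contra! ⟨ht, hu⟩
  rw [abs_lt] at ht hu h
  linarith

lemma abs_round_sub_le (h : |1 - t - u| < ε) (hsmall : |t| < ε ∨ |u| < ε) :
    |((if ε ≤ |t| then 1 else 0 : ℤ) : ℝ) - t| ≤ 2 * ε := by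
  have hsum := abs_lt.mp h
  split_ifs with ht
  · have hu := abs_lt.mp (hsmall.resolve_left (not_lt.mpr ht))
    rw [Int.cast_one, abs_le]
    constructor <;> linarith
  · rw [Int.cast_zero, zero_sub, abs_neg]
    linarith

end Pair

section Objective

variable {k : ℕ} (a : Fin k → ℤ) (C : ℤ) (P : ℝ) (ρ : ℝ → ℝ)

lemma fgen_joinHalves_indicator {S : Finset (Fin k)}
    (hS : ∑ i ∈ S, a i = C) (hρ0 : ρ 0 = 0) (hρ1 : ρ 1 = 1) :
    fgen k a C P ρ (joinHalves (fun i => if i ∈ S then 1 else 0)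
      (fun i => if i ∈ S then 0 else 1)) = k := by
  have hresidual : ∑ i ∈ S, (a i : ℝ) = C := by exact_mod_cast hS
  have hpair : ∀ i, ρ (if i ∈ S then 1 else 0) + ρ (if i ∈ S then 0 else 1) = 1 := by
    intro i
    split_ifs <;> simp [hρ0, hρ1]
  have hbalanced : ∀ i, (1 - (if i ∈ S then 1 else 0) - (if i ∈ S then 0 else 1) : ℝ) = 0 := by
    intro i
    split_ifs <;> ring
  simp [fgen, sum_fin_two_mul, hresidual, hpair, hbalanced]

lemma penalty_le_fgen (hP : 0 ≤ P) (hρ : ∀ t, 0 ≤ ρ t) (x : Fin (2 * k) → ℝ) (i : Fin k) :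
    P * (1 - x (lo k i) - x (hi k i)) ^ 2 ≤ fgen k a C P ρ x := by
  have hterm : (1 - x (lo k i) - x (hi k i)) ^ 2 ≤ ∑ j, (1 - x (lo k j) - x (hi k j)) ^ 2 :=
    single_le_sum (f := fun j => (1 - x (lo k j) - x (hi k j)) ^ 2)
      (fun j _ => sq_nonneg _) (mem_univ i)
  have := mul_le_mul_of_nonneg_left hterm hP
  have := sum_nonneg fun j (_ : j ∈ univ) => hρ (x j)
  unfold fgen
  nlinarith [sq_nonneg ((C : ℝ) - ∑ i : Fin k, (a i : ℝ) * x (lo k i))]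

lemma residual_add_regularizer_le_fgen (hP : 0 ≤ P) (x : Fin (2 * k) → ℝ) :
    ((C : ℝ) - ∑ i, (a i : ℝ) * x (lo k i)) ^ 2 + ∑ i, (ρ (x (lo k i)) + ρ (x (hi k i)))
      ≤ fgen k a C P ρ x := by
  have := mul_nonneg hP
    (sum_nonneg fun i (_ : i ∈ univ) => sq_nonneg (1 - x (lo k i) - x (hi k i)))
  unfold fgen
  rw [sum_fin_two_mul k fun j => ρ (x j)]
  linarith

theorem exists_sum_eq_of_fgen_lt {ε : ℝ} (hε : 0 < ε) (hε3 : 3 * ε ≤ 1)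
    (hεa : ε * (4 * ∑ i, |(a i : ℝ)|) ≤ 1) (hP : 2 * k / ε ^ 2 ≤ P)
    (hρ₀ : ∀ t, 0 ≤ ρ t) (hρbig : ∀ t : ℝ, ε ≤ |t| → ρ t = 1)
    (x : Fin (2 * k) → ℝ) (hx : fgen k a C P ρ x < k + 1 / 4) :
    ∃ S : Finset (Fin k), ∑ i ∈ S, a i = C := by
  classical
  have hPε : 2 * k ≤ P * ε ^ 2 := (div_le_iff₀ (by positivity)).mp hP
  have hP0 : 0 ≤ P := (by positivity : 0 ≤ 2 * (k : ℝ) / ε ^ 2).trans hP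
  have hbalanced : ∀ i, |1 - x (lo k i) - x (hi k i)| < ε := by
    intro i
    have hk : (1 : ℝ) ≤ k := by exact_mod_cast i.pos
    have := penalty_le_fgen a C P ρ hP0 hρ₀ x i
    refine abs_lt_of_sq_lt_sq (lt_of_mul_lt_mul_left ?_ hP0) hε.le
    linarith
  have hone_large : ∀ i, ε ≤ |x (lo k i)| ∨ ε ≤ |x (hi k i)| :=
    fun i => le_abs_or_le_abs_of_abs_one_sub_sub_lt hε3 (hbalanced i)
  have hpair_ge : ∀ i, 1 ≤ ρ (x (lo k i)) + ρ (x (hi k i)) := by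
    intro i
    rcases hone_large i with h | h
    · linarith [hρbig _ h, hρ₀ (x (hi k i))]
    · linarith [hρbig _ h, hρ₀ (x (lo k i))]
  have hfit := residual_add_regularizer_le_fgen a C P ρ hP0 x
  have hregularizer : (k : ℝ) ≤ ∑ i, (ρ (x (lo k i)) + ρ (x (hi k i))) := by
    simpa using sum_le_sum fun i (_ : i ∈ univ) => hpair_ge i
  have hone_small : ∀ i, |x (lo k i)| < ε ∨ |x (hi k i)| < ε := by
    intro i
    by_contra! hlarge
    -- the other pairs contribute at least `k - 1`, this one contributes `2`
    have := single_le_sum (f := fun j => ρ (x (lo k j)) + ρ (x (hi k j)) - 1)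
      (fun j _ => sub_nonneg.mpr (hpair_ge j)) (mem_univ i)
    simp only [hρbig _ hlarge.1, hρbig _ hlarge.2, sum_sub_distrib, sum_const, card_univ,
      Fintype.card_fin, nsmul_eq_mul, mul_one] at this
    linarith [sq_nonneg ((C : ℝ) - ∑ i, (a i : ℝ) * x (lo k i))]
  have hresidual : |(C : ℝ) - ∑ i, a i * x (lo k i)| < 1 / 2 :=
    abs_lt_of_sq_lt_sq (by linarith) (by norm_num)
  refine ⟨univ.filter fun i => ε ≤ |x (lo k i)|, ?_⟩
  rw [sum_filter, ← sum_mul_eq_of_abs_sub_le a (fun i => if ε ≤ |x (lo k i)| then 1 else 0) C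
    (fun i => x (lo k i)) (δ := 2 * ε) ?_ (by linarith) hresidual]
  · simp only [mul_ite, mul_one, mul_zero]
  · exact fun i => abs_round_sub_le (hbalanced i) (hone_small i)

end Objective

theorem generalized_theorem_two_general
    (k : ℕ) (a : Fin k → ℤ) (C : ℤ)
    (ε P : ℝ)
    (hε : 0 < ε) (hε' : ε ≤ 1 / (4 * ∑ i, |(a i : ℝ)|)) (hP : 2 * k / ε ^ 2 ≤ P)
    (ρ : ℝ → ℝ) (hρ₀ : ∀ t, 0 ≤ ρ t)
    (hρzero : ρ 0 = 0) (hρbig : ∀ t : ℝ, ε ≤ |t| → ρ t = 1) :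
    ((∃ S : Finset (Fin k), ∑ i ∈ S, a i = C)
        ↔ ∃ x : Fin (2 * k) → ℝ, fgen k a C P ρ x ≤ k)
      ∧ ((¬ ∃ S : Finset (Fin k), ∑ i ∈ S, a i = C)
        → ∀ x : Fin (2 * k) → ℝ, (k : ℝ) + 1 / 4 ≤ fgen k a C P ρ x) := by
  have hsum_pos : 0 < ∑ i, |(a i : ℝ)| := by
    have := one_div_pos.mp (hε.trans_le hε')
    linarith
  have hεa : ε * (4 * ∑ i, |(a i : ℝ)|) ≤ 1 := (le_div_iff₀ (by positivity)).mp hε'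
  have hε4 : 4 * ε ≤ 1 := by nlinarith [one_le_sum_abs_of_pos a hsum_pos]
  have hρone : ρ 1 = 1 := hρbig 1 (by rw [abs_one]; linarith)
  have hgap : (¬ ∃ S : Finset (Fin k), ∑ i ∈ S, a i = C)
      → ∀ x, (k : ℝ) + 1 / 4 ≤ fgen k a C P ρ x := fun hno x => not_lt.mp fun hx =>
    hno (exists_sum_eq_of_fgen_lt a C P ρ hε (by linarith) hεa hP hρ₀ hρbig x hx)
  refine ⟨⟨fun ⟨S, hS⟩ => ⟨_, (fgen_joinHalves_indicator a C P ρ hS hρzero hρone).le⟩,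
    fun ⟨x, hx⟩ => ?_⟩, hgap⟩
  by_contra hno
  linarith [hgap hno x]

/-- Generalized Theorem 2: for any regularization term `ρ` with `0 ≤ ρ ≤ 1`,
`ρ(0) = 0` and `ρ(t) = 1` for `|t| ≥ ε`, a good subset exists iff some `x`
has `f_ρ(x) ≤ k`; and if no good subset exists then `f_ρ ≥ k + 1/4`. -/
theorem generalized_theorem_two
    (k : ℕ) (hk : 1 ≤ k) (a : Fin k → ℤ) (C : ℤ)
    (ha : ∀ i, a i ≠ 0) (hC : C ≠ 0) (ε P : ℝ)
    (hε : 0 < ε) (hε' : ε ≤ 1 / (4 * ∑ i, |(a i : ℝ)|)) (hP : 2 * k / ε ^ 2 ≤ P)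
    (ρ : ℝ → ℝ) (hρ₀ : ∀ t, 0 ≤ ρ t) (hρ₁ : ∀ t, ρ t ≤ 1)
    (hρzero : ρ 0 = 0) (hρbig : ∀ t : ℝ, ε ≤ |t| → ρ t = 1) :
    ((∃ S : Finset (Fin k), ∑ i ∈ S, a i = C)
        ↔ ∃ x : Fin (2 * k) → ℝ, fgen k a C P ρ x ≤ k)
      ∧ ((¬ ∃ S : Finset (Fin k), ∑ i ∈ S, a i = C)
        → ∀ x : Fin (2 * k) → ℝ, (k : ℝ) + 1 / 4 ≤ fgen k a C P ρ x) :=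
  generalized_theorem_two_general k a C ε P hε hε' hP ρ hρ₀ hρzero hρbig
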